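/- Let b = (b₁,b₂) ∈ ℂ², ℓ = (ℓ_{j,k}) ∈ M₂(ℂ), n ≥ 1, and X = (X₁,X₂) ∈ Mₙ(ℂ)². Set W_j = [[b_j·Iₙ, ℓ_{j,1}X₁ + ℓ_{j,2}X₂],[0, b_j·Iₙ]] ∈ M_{2n}(ℂ), B₀ = ℒ(b₁,b₂) ∈ M_{4s}(ℂ), and Y_j = ℓ_{1,j}R₁ + ℓ_{2,j}R₂. Then the 8sn×8sn matrix ℒ(W₁,W₂) is unitarily conjugate to the 2×2-block matrix [[B₀⊗Iₙ, Λ_Y(X)],[Λ_Y(X)*, B₀⊗Iₙ]], where Λ_Y(X) = Y₁⊗X₁ + Y₂⊗X₂, via a unitary which, after the natural identification of ℂ^{4s}⊗ℂ^{2n} with ℂ⁸⊗ℂ^{sn}, is of the form (8×8 permutation matrix) ⊗ I_{sn}. In particular, ℒ(W₁,W₂) is positive definite if and only if [[B₀⊗Iₙ, Λ_Y(X)],[Λ_Y(X)*, B₀⊗Iₙ]] is positive definite. -/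

import Mathlib

open scoped ComplexOrder Kronecker Matrix Matrix.Norms.L2Operator

noncomputable section

/-- Square complex matrices of size `n`. -/
abbrev Mat (n : ℕ) : Type := Matrix (Fin n) (Fin n) ℂ

/-- Assemble a `k × k` array of matrices into a single block matrix. -/
def blockMat {k : ℕ} {α β : Type*} (M : Fin k → Fin k → Matrix α β ℂ) :
    Matrix (Fin k × α) (Fin k × β) ℂ :=
  Matrix.of fun p q => M p.1 q.1 p.2 q.2

/-- The pencil `ℒ(X)` whose positivity defines the free spectrahedron `𝔓`. -/
def scrL {s : ℕ} (C1 C2 : Matrix (Fin s) (Fin s) ℂ) {α : Type*} [DecidableEq α]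
    (X : Matrix α α ℂ × Matrix α α ℂ) :
    Matrix (Fin 4 × (Fin s × α)) (Fin 4 × (Fin s × α)) ℂ :=
  blockMat ![![1, C1 ⊗ₖ X.1, C2 ⊗ₖ X.2, 0],
             ![(C1 ⊗ₖ X.1)ᴴ, 1, 0, C2 ⊗ₖ X.2],
             ![(C2 ⊗ₖ X.2)ᴴ, 0, 1, C1 ⊗ₖ X.1],
             ![0, (C2 ⊗ₖ X.2)ᴴ, (C1 ⊗ₖ X.1)ᴴ, 1]]

/-- The free spectrahedron `𝔓` at level `n`. -/
def freeP {s : ℕ} (C1 C2 : Matrix (Fin s) (Fin s) ℂ) (n : ℕ) : Set (Mat n × Mat n) :=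
  {X | (scrL C1 C2 X).PosDef}

/-- The matrix `R₁`. -/
def Rmat1 {s : ℕ} (C1 : Matrix (Fin s) (Fin s) ℂ) :
    Matrix (Fin 4 × Fin s) (Fin 4 × Fin s) ℂ :=
  blockMat ![![0, C1, 0, 0], ![0, 0, 0, 0], ![0, 0, 0, C1], ![0, 0, 0, 0]]

/-- The matrix `R₂`. -/
def Rmat2 {s : ℕ} (C2 : Matrix (Fin s) (Fin s) ℂ) :
    Matrix (Fin 4 × Fin s) (Fin 4 × Fin s) ℂ :=
  blockMat ![![0, 0, C2, 0], ![0, 0, 0, C2], ![0, 0, 0, 0], ![0, 0, 0, 0]]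

/-- `ℒ(z₁, z₂)` at level one, as a `4s × 4s` matrix. -/
def scrL1 {s : ℕ} (C1 C2 : Matrix (Fin s) (Fin s) ℂ) (z1 z2 : ℂ) :
    Matrix (Fin 4 × Fin s) (Fin 4 × Fin s) ℂ :=
  blockMat ![![1, z1 • C1, z2 • C2, 0],
             ![(z1 • C1)ᴴ, 1, 0, z2 • C2],
             ![(z2 • C2)ᴴ, 0, 1, z1 • C1],
             ![0, (z2 • C2)ᴴ, (z1 • C1)ᴴ, 1]]

/-- The `2 × 2` block matrix `[[b•I, L],[0, b•I]]`, i.e. the value of an affine free map on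
the nilpotent `S ⊗ X`. -/
def Wmat {n : ℕ} (b : ℂ) (L : Mat n) : Matrix (Fin 2 × Fin n) (Fin 2 × Fin n) ℂ :=
  blockMat ![![b • 1, L], ![0, b • 1]]

/-- The `2 × 2` block matrix `[[B₀ ⊗ Iₙ, Λ_Y(X)],[Λ_Y(X)*, B₀ ⊗ Iₙ]]`. -/
def bigRHS {s : ℕ} (C1 C2 : Matrix (Fin s) (Fin s) ℂ) (b1 b2 : ℂ)
    (ℓ : Matrix (Fin 2) (Fin 2) ℂ) {n : ℕ} (X : Mat n × Mat n) :
    Matrix (Fin 2 × ((Fin 4 × Fin s) × Fin n)) (Fin 2 × ((Fin 4 × Fin s) × Fin n)) ℂ :=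
  blockMat
    ![![scrL1 C1 C2 b1 b2 ⊗ₖ (1 : Mat n),
        (ℓ 0 0 • Rmat1 C1 + ℓ 1 0 • Rmat2 C2) ⊗ₖ X.1 +
          (ℓ 0 1 • Rmat1 C1 + ℓ 1 1 • Rmat2 C2) ⊗ₖ X.2],
      ![((ℓ 0 0 • Rmat1 C1 + ℓ 1 0 • Rmat2 C2) ⊗ₖ X.1 +
          (ℓ 0 1 • Rmat1 C1 + ℓ 1 1 • Rmat2 C2) ⊗ₖ X.2)ᴴ,
        scrL1 C1 C2 b1 b2 ⊗ₖ (1 : Mat n)]]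

/-! Up to reassociating indices, `ℒ(X)` is the monic pencil `L_R(X) = I + Λ_R(X) + Λ_R(X)*` with
`Λ_R(X) = R₁ ⊗ X₁ + R₂ ⊗ X₂`. Since `W_j = b_j I + E₁₂ ⊗ L_j`, moving the `ℂ²` factor of the `W_j`
to the front turns `Λ_R(W)` into the upper triangular block matrix
`[[Λ_R(b) ⊗ Iₙ, Λ_R(L)], [0, Λ_R(b) ⊗ Iₙ]]`, and `Λ_R(L) = Λ_Y(X)` because `L = ℓ X` is linear
in `X`. Adding `I` and the adjoint gives the block matrix of the statement; positive definiteness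
is invariant under permuting the index set. -/

open Matrix

theorem Matrix.posDef_submatrix_equiv {m n : Type*} [Fintype m] [Fintype n] {M : Matrix n n ℂ}
    (e : m ≃ n) : (M.submatrix e e).PosDef ↔ M.PosDef :=
  ⟨fun h => by simpa using h.submatrix e.symm.injective, fun h => h.submatrix e.injective⟩

def prodLeftComm (α β γ : Type*) : α × β × γ ≃ β × α × γ where
  toFun p := (p.2.1, p.1, p.2.2)
  invFun p := (p.2.1, p.1, p.2.2)
  left_inv _ := rfl
  right_inv _ := rfl

section Pencil

variable {m α : Type*}

def homPencil (A : Matrix m m ℂ × Matrix m m ℂ) (X : Matrix α α ℂ × Matrix α α ℂ) :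
    Matrix (m × α) (m × α) ℂ :=
  A.1 ⊗ₖ X.1 + A.2 ⊗ₖ X.2

def monicPencil [DecidableEq m] [DecidableEq α] (A : Matrix m m ℂ × Matrix m m ℂ)
    (X : Matrix α α ℂ × Matrix α α ℂ) : Matrix (m × α) (m × α) ℂ :=
  1 + homPencil A X + (homPencil A X)ᴴ

theorem homPencil_linearCombination (A : Matrix m m ℂ × Matrix m m ℂ)
    (ℓ : Matrix (Fin 2) (Fin 2) ℂ) (X : Matrix α α ℂ × Matrix α α ℂ) :
    homPencil A (ℓ 0 0 • X.1 + ℓ 0 1 • X.2, ℓ 1 0 • X.1 + ℓ 1 1 • X.2) =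
      homPencil (ℓ 0 0 • A.1 + ℓ 1 0 • A.2, ℓ 0 1 • A.1 + ℓ 1 1 • A.2) X := by
  simp only [homPencil, kronecker_add, add_kronecker, kronecker_smul, smul_kronecker]
  abel

theorem one_add_blockMat_upper_add_conjTranspose [DecidableEq α] (P N : Matrix α α ℂ) :
    1 + blockMat ![![P, N], ![0, P]] + (blockMat ![![P, N], ![0, P]])ᴴ =
      blockMat ![![1 + P + Pᴴ, N], ![Nᴴ, 1 + P + Pᴴ]] := by
  ext ⟨j, a⟩ ⟨j', a'⟩
  fin_cases j <;> fin_cases j' <;> simp [blockMat, one_apply]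

end Pencil

section Wmat

variable {m : Type*} {n : ℕ} (A : Matrix m m ℂ × Matrix m m ℂ) (b1 b2 : ℂ) (L1 L2 : Mat n)

theorem homPencil_Wmat :
    homPencil A (Wmat b1 L1, Wmat b2 L2) =
      (blockMat ![![(b1 • A.1 + b2 • A.2) ⊗ₖ (1 : Mat n), homPencil A (L1, L2)],
        ![0, (b1 • A.1 + b2 • A.2) ⊗ₖ (1 : Mat n)]]).submatrix
        (prodLeftComm _ _ _) (prodLeftComm _ _ _) := by
  ext ⟨a, j, k⟩ ⟨a', j', k'⟩
  fin_cases j <;> fin_cases j' <;> simp [homPencil, Wmat, blockMat, prodLeftComm, one_apply] <;>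
    split_ifs <;> ring

theorem monicPencil_Wmat [DecidableEq m] :
    monicPencil A (Wmat b1 L1, Wmat b2 L2) =
      (blockMat
        ![![1 + (b1 • A.1 + b2 • A.2) ⊗ₖ (1 : Mat n) + ((b1 • A.1 + b2 • A.2) ⊗ₖ (1 : Mat n))ᴴ,
            homPencil A (L1, L2)],
          ![(homPencil A (L1, L2))ᴴ,
            1 + (b1 • A.1 + b2 • A.2) ⊗ₖ (1 : Mat n) + ((b1 • A.1 + b2 • A.2) ⊗ₖ (1 : Mat n))ᴴ]]).submatrix
        (prodLeftComm _ _ _) (prodLeftComm _ _ _) := by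
  rw [monicPencil, homPencil_Wmat, ← one_add_blockMat_upper_add_conjTranspose,
    conjTranspose_submatrix, ← submatrix_one_equiv (prodLeftComm _ _ _)]
  rfl

end Wmat

section scrL

variable {s : ℕ} (C1 C2 : Matrix (Fin s) (Fin s) ℂ)

theorem scrL1_eq_one_add_add_conjTranspose (z1 z2 : ℂ) :
    scrL1 C1 C2 z1 z2 =
      1 + (z1 • Rmat1 C1 + z2 • Rmat2 C2) + (z1 • Rmat1 C1 + z2 • Rmat2 C2)ᴴ := by
  ext ⟨i, c⟩ ⟨i', c'⟩
  simp only [scrL1, Rmat1, Rmat2, blockMat, Matrix.add_apply, Matrix.smul_apply,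
    conjTranspose_apply, of_apply, one_apply, Prod.mk.injEq]
  fin_cases i <;> fin_cases i' <;>
    simp only [Fin.zero_eta, Fin.mk_one, Fin.reduceFinMk, cons_val] <;>
    simp [one_apply]

theorem scrL_eq_monicPencil {α : Type*} [DecidableEq α] (X : Matrix α α ℂ × Matrix α α ℂ) :
    scrL C1 C2 X = (monicPencil (Rmat1 C1, Rmat2 C2) X).submatrix
      (Equiv.prodAssoc _ _ _).symm (Equiv.prodAssoc _ _ _).symm := by
  ext ⟨i, c, x⟩ ⟨i', c', x'⟩
  simp only [scrL, monicPencil, homPencil, Rmat1, Rmat2, blockMat, submatrix_apply,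
    Matrix.add_apply, conjTranspose_apply, kroneckerMap_apply, of_apply, one_apply,
    Prod.mk.injEq, Equiv.prodAssoc_symm_apply]
  fin_cases i <;> fin_cases i' <;>
    simp only [Fin.zero_eta, Fin.mk_one, Fin.reduceFinMk, cons_val] <;>
    simp [one_apply]

theorem scrL_Wmat_eq_bigRHS_submatrix (b1 b2 : ℂ) (ℓ : Matrix (Fin 2) (Fin 2) ℂ) {n : ℕ}
    (X : Mat n × Mat n) :
    scrL C1 C2 (Wmat b1 (ℓ 0 0 • X.1 + ℓ 0 1 • X.2), Wmat b2 (ℓ 1 0 • X.1 + ℓ 1 1 • X.2)) =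
      (bigRHS C1 C2 b1 b2 ℓ X).submatrix
        ((Equiv.prodAssoc _ _ _).symm.trans (prodLeftComm _ _ _))
        ((Equiv.prodAssoc _ _ _).symm.trans (prodLeftComm _ _ _)) := by
  have hdiag : scrL1 C1 C2 b1 b2 ⊗ₖ (1 : Mat n) =
      1 + (b1 • Rmat1 C1 + b2 • Rmat2 C2) ⊗ₖ (1 : Mat n) +
        ((b1 • Rmat1 C1 + b2 • Rmat2 C2) ⊗ₖ (1 : Mat n))ᴴ := by
    rw [scrL1_eq_one_add_add_conjTranspose, add_kronecker, add_kronecker, one_kronecker_one,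
      conjTranspose_kronecker, conjTranspose_one]
  rw [scrL_eq_monicPencil, monicPencil_Wmat, homPencil_linearCombination, submatrix_submatrix,
    bigRHS, hdiag]
  rfl

end scrL

theorem scrL_of_W_conjugate_to_blocks_general {s : ℕ}
    (C1 C2 : Matrix (Fin s) (Fin s) ℂ) (b1 b2 : ℂ)
    (ℓ : Matrix (Fin 2) (Fin 2) ℂ) {n : ℕ} (X : Mat n × Mat n) :
    ∃ π : Fin 4 × Fin 2 ≃ Fin 2 × Fin 4,
      (scrL C1 C2
          (Wmat b1 (ℓ 0 0 • X.1 + ℓ 0 1 • X.2), Wmat b2 (ℓ 1 0 • X.1 + ℓ 1 1 • X.2)) =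
        (bigRHS C1 C2 b1 b2 ℓ X).submatrix
          (fun p => ((π (p.1, p.2.2.1)).1, (((π (p.1, p.2.2.1)).2, p.2.1), p.2.2.2)))
          (fun p => ((π (p.1, p.2.2.1)).1, (((π (p.1, p.2.2.1)).2, p.2.1), p.2.2.2)))) ∧
      ((scrL C1 C2
          (Wmat b1 (ℓ 0 0 • X.1 + ℓ 0 1 • X.2), Wmat b2 (ℓ 1 0 • X.1 + ℓ 1 1 • X.2))).PosDef ↔
        (bigRHS C1 C2 b1 b2 ℓ X).PosDef) := by
  refine ⟨Equiv.prodComm _ _, scrL_Wmat_eq_bigRHS_submatrix C1 C2 b1 b2 ℓ X, ?_⟩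
  rw [scrL_Wmat_eq_bigRHS_submatrix, Matrix.posDef_submatrix_equiv]

/-- Lemma 3.2: `ℒ(W₁, W₂)` is unitarily conjugate, via a block permutation
`(8 × 8 permutation) ⊗ I_{sn}`, to `[[B₀ ⊗ Iₙ, Λ_Y(X)],[Λ_Y(X)*, B₀ ⊗ Iₙ]]`. -/
theorem scrL_of_W_conjugate_to_blocks {s : ℕ} (hs : 0 < s)
    (C1 C2 : Matrix (Fin s) (Fin s) ℂ) (b1 b2 : ℂ)
    (ℓ : Matrix (Fin 2) (Fin 2) ℂ) {n : ℕ} (X : Mat n × Mat n) :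
    ∃ π : Fin 4 × Fin 2 ≃ Fin 2 × Fin 4,
      (scrL C1 C2
          (Wmat b1 (ℓ 0 0 • X.1 + ℓ 0 1 • X.2), Wmat b2 (ℓ 1 0 • X.1 + ℓ 1 1 • X.2)) =
        (bigRHS C1 C2 b1 b2 ℓ X).submatrix
          (fun p => ((π (p.1, p.2.2.1)).1, (((π (p.1, p.2.2.1)).2, p.2.1), p.2.2.2)))
          (fun p => ((π (p.1, p.2.2.1)).1, (((π (p.1, p.2.2.1)).2, p.2.1), p.2.2.2)))) ∧
      ((scrL C1 C2
          (Wmat b1 (ℓ 0 0 • X.1 + ℓ 0 1 • X.2), Wmat b2 (ℓ 1 0 • X.1 + ℓ 1 1 • X.2))).PosDef ↔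
        (bigRHS C1 C2 b1 b2 ℓ X).PosDef) :=
  scrL_of_W_conjugate_to_blocks_general C1 C2 b1 b2 ℓ X
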